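/- arXiv:1504.06232 — 2 statements merged into one kernel-verified Lean document; each statement's English description precedes it below -/
import Mathlib

section
/- Let G be a 2－dc-semigroup. If i, j are non-negative integers and k, l are positive integers with i + k ≥ 2 and j + l ≥ 2, and both I_2(i,k) ⊆ G and I_2(j,l) ⊆ G, then I_2(i+j, k+l) ⊆ G. -/
/-- `Ib b i k` is the set of integers `x` with `b^i ≤ x < b^(i+k)`. -/
def Ib (b i k : ℕ) : Set ℕ := {x : ℕ | b ^ i ≤ x ∧ x < b ^ (i + k)}

/-- A set `G` of positive integers is a `b`-dc-semigroup if it is closed under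
multiplication and closed with respect to the number of base-`b` digits. -/
def IsDCSemigroup (b : ℕ) (G : Set ℕ) : Prop :=
  (∀ x ∈ G, 0 < x) ∧
  (∀ x ∈ G, ∀ y ∈ G, x * y ∈ G) ∧
  (∀ x ∈ G, ∀ y : ℕ, 0 < y → Nat.log b y = Nat.log b x → y ∈ G)

/-!
Since `G` is closed under the number of binary digits, it suffices to exhibit, for each
`i + j ≤ m < i + j + k + l`, one element of `G` with `m + 1` binary digits. For all but the
top value of `m` this is a product of powers `2 ^ a * 2 ^ c` with `i ≤ a < i + k`,
`j ≤ c < j + l`. For `m = i + k + j + l - 1` it is `(2 ^ (i + k) - 1) * (2 ^ (j + l) - 1)`,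
which still has `i + k + j + l` digits once both factors have at least two.
-/

lemma pos_of_mem_Ib {b i k x : ℕ} (hb : 0 < b) (hx : x ∈ Ib b i k) : 0 < x :=
  (pow_pos hb i).trans_le hx.1

lemma log_mem_of_mem_Ib {b i k x : ℕ} (hb : 1 < b) (hx : x ∈ Ib b i k) :
    i ≤ Nat.log b x ∧ Nat.log b x < i + k :=
  ⟨Nat.le_log_of_pow_le hb hx.1, Nat.log_lt_of_lt_pow (pos_of_mem_Ib (by omega) hx).ne' hx.2⟩

lemma pow_mem_Ib {b i k a : ℕ} (hb : 1 < b) (hia : i ≤ a) (hak : a < i + k) :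
    b ^ a ∈ Ib b i k :=
  ⟨Nat.pow_le_pow_right (by omega) hia, Nat.pow_lt_pow_right hb hak⟩

lemma pow_sub_one_mem_Ib {b i k : ℕ} (hb : 1 < b) (hk : 0 < k) :
    b ^ (i + k) - 1 ∈ Ib b i k :=
  ⟨Nat.le_sub_one_of_lt (Nat.pow_lt_pow_right hb (by omega)),
    Nat.sub_one_lt (by positivity)⟩

lemma Nat.log_two_pow_sub_one_mul_pow_sub_one {A B : ℕ} (hA : 2 ≤ A) (hB : 2 ≤ B) :
    Nat.log 2 ((2 ^ A - 1) * (2 ^ B - 1)) = A + B - 1 := by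
  have hP : 4 ≤ 2 ^ A := Nat.pow_le_pow_right two_pos hA
  have hQ : 4 ≤ 2 ^ B := Nat.pow_le_pow_right two_pos hB
  apply Nat.log_eq_of_pow_le_of_lt_pow
  · have hPQ : 2 * 2 ^ (A + B - 1) = 2 ^ A * 2 ^ B := by
      rw [← pow_succ', ← pow_add]; congr 1; omega
    -- with `P = 2 ^ A`, `Q = 2 ^ B`: `2 (P - 1) (Q - 1) - P Q = (P - 2) (Q - 2) - 2 ≥ 2`
    zify [show 1 ≤ 2 ^ A by omega, show 1 ≤ 2 ^ B by omega] at hP hQ hPQ ⊢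
    nlinarith
  · rw [Nat.sub_add_cancel (by omega), pow_add]
    exact Nat.mul_lt_mul_of_lt_of_lt (Nat.sub_one_lt (by positivity))
      (Nat.sub_one_lt (by positivity))

namespace IsDCSemigroup

variable {b : ℕ} {G : Set ℕ}

lemma Ib_subset (hG : IsDCSemigroup b G) (hb : 1 < b) {i k : ℕ}
    (hdigits : ∀ m, i ≤ m → m < i + k → ∃ y ∈ G, Nat.log b y = m) : Ib b i k ⊆ G := by
  intro x hx
  obtain ⟨hlo, hhi⟩ := log_mem_of_mem_Ib hb hx
  obtain ⟨y, hy, hlog⟩ := hdigits _ hlo hhi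
  exact hG.2.2 y hy x (pos_of_mem_Ib (by omega) hx) hlog.symm

lemma pow_mem_of_Ib_subset (hG : IsDCSemigroup b G) (hb : 1 < b) {i j k l m : ℕ}
    (hk : 0 < k) (hl : 0 < l) (h1 : Ib b i k ⊆ G) (h2 : Ib b j l ⊆ G) (hm : i + j ≤ m)
    (hmkl : m + 2 ≤ i + k + (j + l)) : b ^ m ∈ G := by
  obtain ⟨a, ha⟩ : ∃ a, a = min (i + k - 1) (m - j) := ⟨_, rfl⟩
  have hprod := hG.2.1 _ (h1 (pow_mem_Ib (a := a) hb (by omega) (by omega)))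
    _ (h2 (pow_mem_Ib (a := m - a) hb (by omega) (by omega)))
  rwa [← pow_add, Nat.add_sub_cancel' (by omega)] at hprod

end IsDCSemigroup

theorem stmt_2 (G : Set ℕ) (hG : IsDCSemigroup 2 G)
    (i j k l : ℕ) (hk : 0 < k) (hl : 0 < l) (hik : 2 ≤ i + k) (hjl : 2 ≤ j + l)
    (h1 : Ib 2 i k ⊆ G) (h2 : Ib 2 j l ⊆ G) :
    Ib 2 (i + j) (k + l) ⊆ G := by
  refine hG.Ib_subset one_lt_two fun m hm hmkl => ?_
  by_cases htop : m + 2 ≤ i + k + (j + l)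
  · exact ⟨2 ^ m, hG.pow_mem_of_Ib_subset one_lt_two hk hl h1 h2 hm htop,
      Nat.log_pow one_lt_two m⟩
  · refine ⟨_, hG.2.1 _ (h1 (pow_sub_one_mem_Ib one_lt_two hk))
      _ (h2 (pow_sub_one_mem_Ib one_lt_two hl)), ?_⟩
    rw [Nat.log_two_pow_sub_one_mul_pow_sub_one hik hjl]
    omega
end

section
/- Let b ≥ 2 be an integer, X a nonempty set of positive integers, J = {⌊log_b x⌋ : x ∈ X}, and j_0 = min J. Assume j_0 ≥ 1 and that there is a positive integer l_0 such that every integer in [j_0, j_0 + l_0) belongs to J. Put d = ⌈j_0/l_0⌉. Then every b-dc-semigroup containing X contains every integer x with x ≥ b^{d·j_0}. -/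
section CarryClosed

variable {E : Set ℕ} {j l : ℕ}
  (hadd : ∀ m ∈ E, ∀ n ∈ E, m + n ∈ E)
  (hcarry : ∀ m ∈ E, ∀ n ∈ E, 1 ≤ m → 1 ≤ n → m + n + 1 ∈ E)
  (hbase : Set.Ico j (j + l) ⊆ E)
include hadd hcarry hbase

theorem Ico_mul_subset_of_carry_closed (hj : 1 ≤ j) (hl : 0 < l) {k : ℕ} (hk : 1 ≤ k) :
    Set.Ico (k * j) (k * j + k * l) ⊆ E := by
  induction k, hk using Nat.le_induction with
  | base => simpa using hbase
  | succ k hk ih =>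
    rintro n ⟨hlo, hhi⟩
    rw [add_mul, one_mul] at hlo
    rw [add_mul, add_mul, one_mul, one_mul] at hhi
    have hkj : 0 < k * j := by positivity
    have hkl : 0 < k * l := by positivity
    by_cases hn : n < k * j + k * l + j
    · have hprev : n - j ∈ Set.Ico (k * j) (k * j + k * l) :=
        Set.mem_Ico.2 ⟨by omega, by omega⟩
      have := hadd _ (ih hprev) j (hbase (Set.mem_Ico.2 ⟨le_rfl, by omega⟩))
      rwa [Nat.sub_add_cancel (by omega)] at this
    · -- carry: `n = (k j + k l - 1) + (n - k j - k l) + 1`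
      have hprev : k * j + k * l - 1 ∈ Set.Ico (k * j) (k * j + k * l) :=
        Set.mem_Ico.2 ⟨by omega, by omega⟩
      have hrest : n - k * j - k * l ∈ Set.Ico j (j + l) := Set.mem_Ico.2 ⟨by omega, by omega⟩
      have := hcarry _ (ih hprev) _ (hbase hrest) (by omega) (by omega)
      rwa [show k * j + k * l - 1 + (n - k * j - k * l) + 1 = n by omega] at this

theorem Ici_ceilDiv_mul_subset_of_carry_closed (hj : 1 ≤ j) (hl : 0 < l) :
    Set.Ici ((j ⌈/⌉ l) * j) ⊆ E := by
  intro n hn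
  set k := n / j
  have hkn : k * j ≤ n := Nat.div_mul_le_self n j
  have hnk : n < k * j + j := by
    have := Nat.lt_div_mul_add (a := n) (show 0 < j by omega)
    omega
  have hjk : j ≤ l * k :=
    (ceilDiv_le_iff_le_mul hl).1 ((Nat.le_div_iff_mul_le (by omega)).2 hn)
  have hk : 1 ≤ k := Nat.pos_of_ne_zero fun h => by simp [h] at hjk; omega
  exact Ico_mul_subset_of_carry_closed hadd hcarry hbase hj hl hk
    ⟨hkn, by rw [mul_comm k l]; omega⟩

end CarryClosed

section Digits

variable {b : ℕ}

theorem Nat.log_pow_succ_sub_one (hb : 1 < b) (k : ℕ) : Nat.log b (b ^ (k + 1) - 1) = k := by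
  have hk : 0 < b ^ k := pow_pos (by omega) k
  have hk1 : 2 * b ^ k ≤ b ^ (k + 1) := by rw [pow_succ']; exact Nat.mul_le_mul_right _ hb
  exact Nat.log_eq_of_pow_le_of_lt_pow (by omega) (by omega)

theorem pow_add_add_one_le_mul_pow_succ_sub_one (hb : 2 ≤ b) {m n : ℕ} (hm : 1 ≤ m)
    (hn : 1 ≤ n) : b ^ (m + n + 1) ≤ (b ^ (m + 1) - 1) * (b ^ (n + 1) - 1) := by
  have hbm : 2 ≤ b ^ m := hb.trans (Nat.le_self_pow (by omega) b)
  have hbn : 2 ≤ b ^ n := hb.trans (Nat.le_self_pow (by omega) b)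
  have hA : b ^ (m + 1) * 2 ≤ b ^ (m + n + 1) := by
    rw [show m + n + 1 = m + 1 + n by ring, pow_add b (m + 1) n]; gcongr
  have hB : b ^ (n + 1) * 2 ≤ b ^ (m + n + 1) := by
    rw [show m + n + 1 = n + 1 + m by ring, pow_add b (n + 1) m]; gcongr
  have hAB : b ^ (m + n + 1) * 2 ≤ b ^ (m + 1) * b ^ (n + 1) := by
    rw [← pow_add, show m + 1 + (n + 1) = m + n + 1 + 1 by ring, pow_succ b (m + n + 1)]
    gcongr
  have h1 : 1 ≤ b ^ (m + 1) := Nat.one_le_pow _ _ (by omega)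
  have h2 : 1 ≤ b ^ (n + 1) := Nat.one_le_pow _ _ (by omega)
  zify [h1, h2] at *
  nlinarith

theorem Nat.log_mul_pow_succ_sub_one (hb : 2 ≤ b) {m n : ℕ} (hm : 1 ≤ m) (hn : 1 ≤ n) :
    Nat.log b ((b ^ (m + 1) - 1) * (b ^ (n + 1) - 1)) = m + n + 1 := by
  refine Nat.log_eq_of_pow_le_of_lt_pow (pow_add_add_one_le_mul_pow_succ_sub_one hb hm hn) ?_
  have hA : 0 < b ^ (m + 1) := by positivity
  have hB : 0 < b ^ (n + 1) := by positivity
  calc _ < b ^ (m + 1) * b ^ (n + 1) :=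
        Nat.mul_lt_mul'' (Nat.sub_lt hA one_pos) (Nat.sub_lt hB one_pos)
    _ = b ^ (m + n + 1 + 1) := by ring

end Digits

namespace IsDCSemigroup

variable {b : ℕ} {G : Set ℕ} (hG : IsDCSemigroup b G)
include hG

theorem mem_of_log_eq {x y : ℕ} (hx : x ∈ G) (hy : 0 < y) (h : Nat.log b y = Nat.log b x) :
    y ∈ G :=
  hG.2.2 x hx y hy h

theorem pow_mem_of_log_eq (hb : 1 < b) {x n : ℕ} (hx : x ∈ G) (h : Nat.log b x = n) :
    b ^ n ∈ G :=
  hG.mem_of_log_eq hx (pow_pos (by omega) n) (by rw [Nat.log_pow hb, h])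

theorem pow_add_mem {m n : ℕ} (hm : b ^ m ∈ G) (hn : b ^ n ∈ G) : b ^ (m + n) ∈ G :=
  pow_add b m n ▸ hG.2.1 _ hm _ hn

theorem pow_add_add_one_mem (hb : 2 ≤ b) {m n : ℕ} (hm : b ^ m ∈ G) (hn : b ^ n ∈ G)
    (hm1 : 1 ≤ m) (hn1 : 1 ≤ n) : b ^ (m + n + 1) ∈ G := by
  have hpred : ∀ k, 1 ≤ k → b ^ k ∈ G → b ^ (k + 1) - 1 ∈ G := fun k hk hkG =>
    hG.mem_of_log_eq hkG (Nat.sub_pos_of_lt (Nat.one_lt_pow (by omega) (by omega)))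
      (by rw [Nat.log_pow_succ_sub_one (by omega), Nat.log_pow (by omega)])
  exact hG.pow_mem_of_log_eq (by omega) (hG.2.1 _ (hpred m hm1 hm) _ (hpred n hn1 hn))
    (Nat.log_mul_pow_succ_sub_one hb hm1 hn1)

end IsDCSemigroup

theorem stmt_13_general (b : ℕ) (hb : 2 ≤ b) (X : Set ℕ)
    (J : Set ℕ) (hJ : J = {n : ℕ | ∃ x ∈ X, Nat.log b x = n})
    (j₀ : ℕ) (hj₀ : 1 ≤ j₀)
    (l₀ : ℕ) (hl₀pos : 0 < l₀)
    (hfull : ∀ n : ℕ, j₀ ≤ n → n < j₀ + l₀ → n ∈ J)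
    (d : ℕ) (hd : d = j₀ ⌈/⌉ l₀) :
    ∀ H : Set ℕ, IsDCSemigroup b H → X ⊆ H →
      ∀ x : ℕ, b ^ (d * j₀) ≤ x → x ∈ H := by
  intro H hH hXH x hx
  have hbase : Set.Ico j₀ (j₀ + l₀) ⊆ {n | b ^ n ∈ H} := by
    rintro n ⟨hlo, hhi⟩
    have hn := hfull n hlo hhi
    rw [hJ] at hn
    obtain ⟨y, hyX, hy⟩ := hn
    exact hH.pow_mem_of_log_eq (by omega) (hXH hyX) hy
  have hexp : Set.Ici (d * j₀) ⊆ {n | b ^ n ∈ H} := hd ▸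
    Ici_ceilDiv_mul_subset_of_carry_closed (fun _ hm _ hn => hH.pow_add_mem hm hn)
      (fun _ hm _ hn => hH.pow_add_add_one_mem hb hm hn) hbase hj₀ hl₀pos
  have hlog : d * j₀ ≤ Nat.log b x := Nat.le_log_of_pow_le (by omega) hx
  exact hH.mem_of_log_eq (hexp hlog) (lt_of_lt_of_le (by positivity) hx)
    (Nat.log_pow (by omega) _).symm

theorem stmt_13 (b : ℕ) (hb : 2 ≤ b) (X : Set ℕ) (hXne : X.Nonempty)
    (hXpos : ∀ x ∈ X, 0 < x)
    (J : Set ℕ) (hJ : J = {n : ℕ | ∃ x ∈ X, Nat.log b x = n})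
    (j₀ : ℕ) (hj₀mem : j₀ ∈ J) (hj₀min : ∀ n ∈ J, j₀ ≤ n) (hj₀ : 1 ≤ j₀)
    (l₀ : ℕ) (hl₀pos : 0 < l₀)
    (hfull : ∀ n : ℕ, j₀ ≤ n → n < j₀ + l₀ → n ∈ J)
    (d : ℕ) (hd : d = j₀ ⌈/⌉ l₀) :
    ∀ H : Set ℕ, IsDCSemigroup b H → X ⊆ H →
      ∀ x : ℕ, b ^ (d * j₀) ≤ x → x ∈ H :=
  stmt_13_general b hb X J hJ j₀ hj₀ l₀ hl₀pos hfull d hd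
end
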